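/- Let R be a commutative noetherian local ring with residue field k, let M, N be finitely generated R-modules, and n ≥ 0. Then ξ(n, M ⊕ N) = ξ(n, M) + ξ(n, N). -/

import Mathlib

noncomputable section

/-- A linear map factors through a finitely generated free module
(equivalently, through a projective module, for maps between finitely
generated modules). -/
def FactorsThruFree (R : Type) [Ring R] {M N : Type} [AddCommGroup M] [Module R M]
    [AddCommGroup N] [Module R N] (f : M →ₗ[R] N) : Prop :=
  ∃ (b : ℕ) (g : (Fin b → R) →ₗ[R] N) (h : M →ₗ[R] (Fin b → R)), f = g ∘ₗ h

/-- `SyzFactors R n f` : an induced map `Ω^n f` between `n`-th syzygies of `M` and `N`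
(computed from chosen free covers) factors through a projective (= f.g. free) module. -/
def SyzFactors (R : Type) [Ring R] :
    (n : ℕ) → {M : Type} → [AddCommGroup M] → [Module R M] →
      {N : Type} → [AddCommGroup N] → [Module R N] → (M →ₗ[R] N) → Prop
  | 0, _M, _, _, _N, _, _, f => FactorsThruFree R f
  | n + 1, _M, _, _, _N, _, _, f =>
      ∃ (a b : ℕ) (p : (Fin a → R) →ₗ[R] _M) (q : (Fin b → R) →ₗ[R] _N)
        (φ : (Fin a → R) →ₗ[R] (Fin b → R)),
        Function.Surjective p ∧ Function.Surjective q ∧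
        ∃ hcomm : q ∘ₗ φ = f ∘ₗ p,
          SyzFactors R n (φ.restrict (p := LinearMap.ker p) (q := LinearMap.ker q)
            (fun x hx => by
              have h1 : q (φ x) = f (p x) := LinearMap.congr_fun hcomm x
              rw [LinearMap.mem_ker] at hx ⊢
              rw [h1, hx, map_zero]))

/-- The `n`-th approximated ξ-invariant: the dimension over the residue field `k` of the
subspace of `Hom_R(M, k)` of maps whose `n`-th syzygy factors through a projective. -/
def xi (R : Type) [CommRing R] [IsLocalRing R] (n : ℕ)
    (M : Type) [AddCommGroup M] [Module R M] : ℕ :=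
  Module.finrank (IsLocalRing.ResidueField R)
    (Submodule.span (IsLocalRing.ResidueField R)
      {f : M →ₗ[R] IsLocalRing.ResidueField R | SyzFactors R n f})

/-! Precomposing with any map out of a finitely generated module preserves the property that the
`n`-th syzygy map factors through a free module: lift along the free covers and recurse on the
kernels, which stay finitely generated because `R` is noetherian. Under
`Hom(M × N, k) ≃ Hom(M, k) × Hom(N, k)` the good maps on `M × N` therefore land in the product of
the good maps on `M` and on `N` (restrict along `inl`, `inr`) and contain both factors (extend by
zero along `fst`, `snd`), so the span of the former is the product of the spans of the latter. -/

open IsLocalRing Submodule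

theorem LinearMap.map_mem_ker_of_comp_eq {R M N P Q : Type} [Ring R] [AddCommGroup M] [Module R M]
    [AddCommGroup N] [Module R N] [AddCommGroup P] [Module R P] [AddCommGroup Q] [Module R Q]
    {p : M →ₗ[R] P} {q : N →ₗ[R] Q} {φ : M →ₗ[R] N} {f : P →ₗ[R] Q} (h : q ∘ₗ φ = f ∘ₗ p) :
    ∀ x ∈ LinearMap.ker p, φ x ∈ LinearMap.ker q := by
  intro x hx
  rw [LinearMap.mem_ker] at hx ⊢
  rw [← LinearMap.comp_apply, h, LinearMap.comp_apply, hx, map_zero]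

theorem SyzFactors.comp {R : Type} [Ring R] [IsNoetherianRing R] {n : ℕ} {M' M N : Type}
    [AddCommGroup M'] [Module R M'] [AddCommGroup M] [Module R M] [AddCommGroup N] [Module R N]
    [Module.Finite R M'] {f : M →ₗ[R] N} (hf : SyzFactors R n f) (h : M' →ₗ[R] M) :
    SyzFactors R n (f ∘ₗ h) := by
  induction n generalizing M' M N with
  | zero =>
    obtain ⟨b, g, g', rfl⟩ := hf
    exact ⟨b, g, g' ∘ₗ h, rfl⟩
  | succ n ih =>
    obtain ⟨a, b, p, q, φ, hp, hq, hcomm, hsyz⟩ := hf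
    obtain ⟨a', p', hp'⟩ := Module.Finite.exists_fin' R M'
    obtain ⟨H, hH⟩ := Module.projective_lifting_property p (h ∘ₗ p') hp
    have hcomm' : q ∘ₗ (φ ∘ₗ H) = (f ∘ₗ h) ∘ₗ p' := by
      rw [← LinearMap.comp_assoc, hcomm, LinearMap.comp_assoc, hH, LinearMap.comp_assoc]
    have : Module.Finite R (LinearMap.ker p') :=
      Module.Finite.iff_fg.mpr (IsNoetherian.noetherian _)
    exact ⟨a', b, p', q, φ ∘ₗ H, hp', hq, hcomm',
      ih hsyz (H.restrict (LinearMap.map_mem_ker_of_comp_eq hH))⟩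

theorem Module.Finite.linearMap_of_isNoetherianRing {R S M N : Type} [Ring R] [Ring S]
    [IsNoetherianRing S] [AddCommGroup M] [Module R M] [Module.Finite R M] [AddCommGroup N]
    [Module R N] [Module S N] [SMulCommClass R S N] [Module.Finite S N] :
    Module.Finite S (M →ₗ[R] N) := by
  obtain ⟨m, p, hp⟩ := Module.Finite.exists_fin' R M
  exact Module.Finite.of_injective (LinearMap.lcomp S N p) fun f g hfg =>
    (LinearMap.cancel_right hp).mp hfg

def Submodule.prodEquiv {K M N : Type} [Ring K] [AddCommGroup M] [Module K M] [AddCommGroup N]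
    [Module K N] (p : Submodule K M) (q : Submodule K N) : p.prod q ≃ₗ[K] p × q where
  toFun x := (⟨x.1.1, x.2.1⟩, ⟨x.1.2, x.2.2⟩)
  map_add' _ _ := rfl
  map_smul' _ _ := rfl
  invFun x := ⟨(x.1.1, x.2.1), x.1.2, x.2.2⟩
  left_inv _ := rfl
  right_inv _ := rfl

theorem Submodule.finrank_prod {K V W : Type} [DivisionRing K] [AddCommGroup V] [Module K V]
    [AddCommGroup W] [Module K W] (p : Submodule K V) (q : Submodule K W)
    [FiniteDimensional K p] [FiniteDimensional K q] :
    Module.finrank K (p.prod q) = Module.finrank K p + Module.finrank K q := by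
  rw [(p.prodEquiv q).finrank_eq, Module.finrank_prod]

theorem Submodule.span_eq_prod_of_subset {K V W : Type} [Semiring K] [AddCommMonoid V]
    [Module K V] [AddCommMonoid W] [Module K W] {s : Set (V × W)} {A : Set V} {B : Set W}
    (hle : LinearMap.inl K V W '' A ∪ LinearMap.inr K V W '' B ⊆ s) (hge : s ⊆ A ×ˢ B) :
    span K s = (span K A).prod (span K B) := by
  refine le_antisymm ?_ ?_
  · rw [span_le]
    exact fun x hx => ⟨subset_span (hge hx).1, subset_span (hge hx).2⟩
  · rw [← LinearMap.span_inl_union_inr]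
    exact span_mono hle

section coprod

variable {R S M N P : Type} [Ring R] [IsNoetherianRing R] [Semiring S] [AddCommGroup M]
  [Module R M] [Module.Finite R M] [AddCommGroup N] [Module R N] [Module.Finite R N]
  [AddCommGroup P] [Module R P] [Module S P] [SMulCommClass R S P] (n : ℕ)

theorem coprodEquiv_symm_image_syzFactors_subset :
    (LinearMap.coprodEquiv S).symm '' {f : M × N →ₗ[R] P | SyzFactors R n f} ⊆
      {f : M →ₗ[R] P | SyzFactors R n f} ×ˢ {f : N →ₗ[R] P | SyzFactors R n f} := by
  rintro _ ⟨g, hg, rfl⟩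
  exact ⟨hg.comp _, hg.comp _⟩

theorem inl_image_union_inr_image_syzFactors_subset :
    LinearMap.inl S (M →ₗ[R] P) (N →ₗ[R] P) '' {f | SyzFactors R n f} ∪
        LinearMap.inr S (M →ₗ[R] P) (N →ₗ[R] P) '' {f | SyzFactors R n f} ⊆
      (LinearMap.coprodEquiv S).symm '' {f : M × N →ₗ[R] P | SyzFactors R n f} := by
  rintro _ (⟨f, hf, rfl⟩ | ⟨f, hf, rfl⟩)
  · refine ⟨f ∘ₗ LinearMap.fst R M N, hf.comp _, ?_⟩
    ext <;> simp
  · refine ⟨f ∘ₗ LinearMap.snd R M N, hf.comp _, ?_⟩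
    ext <;> simp

end coprod

/-- Additivity of the `n`-th approximated ξ-invariant: `ξ(n, M ⊕ N) = ξ(n,M) + ξ(n,N)`. -/
theorem stmt_10 (R : Type) [CommRing R] [IsNoetherianRing R] [IsLocalRing R]
    (M N : Type) [AddCommGroup M] [Module R M] [Module.Finite R M]
    [AddCommGroup N] [Module R N] [Module.Finite R N] (n : ℕ) :
    xi R n (M × N) = xi R n M + xi R n N := by
  let e : (M × N →ₗ[R] ResidueField R) ≃ₗ[ResidueField R]
      (M →ₗ[R] ResidueField R) × (N →ₗ[R] ResidueField R) := (LinearMap.coprodEquiv _).symm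
  have hspan := span_eq_prod_of_subset
    (inl_image_union_inr_image_syzFactors_subset (R := R) (M := M) (N := N)
      (S := ResidueField R) (P := ResidueField R) n)
    (coprodEquiv_symm_image_syzFactors_subset n)
  have hfin : ∀ (X : Type) [AddCommGroup X] [Module R X] [Module.Finite R X],
      Module.Finite (ResidueField R) (X →ₗ[R] ResidueField R) :=
    fun _ _ _ _ => Module.Finite.linearMap_of_isNoetherianRing
  rw [xi, xi, xi, ← e.finrank_map_eq, map_span, LinearEquiv.coe_coe, hspan, finrank_prod]
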